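/- Let n ≥ 1 and let K be a field of characteristic zero. In the cochain complex (C^•, d) of ordered partitions of {1,…,n}, consider the totally antisymmetric element ω_n = (1/n!) Σ_{σ ∈ S_n} sgn(σ) · ({σ(1)}, {σ(2)}, …, {σ(n)}) ∈ C^n, the signed average over all ordered partitions into singletons. Then the class of ω_n in C^n / im(d : C^{n−1} → C^n) is nonzero, and it spans the top cohomology H^n(C). -/

import Mathlib

/-!
The sign functional `P ↦ sgn σ` on the partitions `P = ({σ(1)}, …, {σ(n)})` into singletons
kills every coboundary: in `d B` the splittings `(A, B_i \ A)` and `(B_i \ A, A)` of a block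
give singleton partitions differing by an adjacent transposition, so their signs cancel. It
takes the value `1` on `ω_n`, so `ω_n` is not a coboundary. Conversely, merging the blocks `i`
and `i + 1` of a singleton partition `σ` gives a `B` with `d B = ±(σ + σ ∘ (i i+1))`, so modulo
coboundaries each singleton partition `σ` is `sgn σ` times the identity one, and the latter is
the class of `ω_n`.
-/

/-- `B : Fin k → Finset (Fin n)` is an ordered partition: all blocks are nonempty and
every element of `{1,…,n}` lies in exactly one block (this encodes pairwise disjointness
together with the covering property). -/
def IsOrderedPartition (n k : ℕ) (B : Fin k → Finset (Fin n)) : Prop :=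
  (∀ i, (B i).Nonempty) ∧ ∀ x : Fin n, ∃! i, x ∈ B i

/-- The set of ordered partitions of `{1,…,n}` into `k` blocks. -/
def OrderedPartition (n k : ℕ) : Type :=
  {B : Fin k → Finset (Fin n) // IsOrderedPartition n k B}

/-- `C^k`, the free `K`-vector space on the set of ordered partitions of `{1,…,n}`
into `k` blocks. -/
abbrev OPC (K : Type*) [Field K] (n k : ℕ) : Type _ :=
  OrderedPartition n k →₀ K

/-- Replace the `i`-th block of the tuple `B` by the two consecutive blocks `A`, `A'`
(at positions `i` and `i+1`), shifting the later blocks by one. -/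
def splitBlocks {n k : ℕ} (B : Fin k → Finset (Fin n)) (i : Fin k)
    (A A' : Finset (Fin n)) : Fin (k + 1) → Finset (Fin n) :=
  Function.update (i.succ.insertNth A' B) i.castSucc A

open Classical in
/-- The differential `d : C^k → C^{k+1}`.  On a basis ordered partition `(B₁,…,B_k)` it is
`d(B₁,…,B_k) = Σ_{i} (−1)^{i} Σ_{(A,A')} (B₁,…,B_{i−1}, A, A', B_{i+1},…,B_k)`, the inner
sum running over all ordered pairs `(A, A')` of disjoint nonempty subsets with
`A ∪ A' = B_i` (such a pair is the same as a subset `A ⊆ B_i` with `A' = B_i \ A`;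
the resulting tuple is an ordered partition exactly when both `A` and `A'` are nonempty,
which is what the `dite` below selects).  Here `i` runs over `Fin k` (zero-based), so the
sign `(−1)^i` matches the one-based sign `(−1)^{i−1}` of the informal statement. -/
noncomputable def dOP (K : Type*) [Field K] (n k : ℕ) :
    OPC K n k →ₗ[K] OPC K n (k + 1) :=
  Finsupp.lsum K fun B => LinearMap.toSpanSingleton K _ <|
    ∑ i : Fin k, ∑ A ∈ (B.1 i).powerset,
      if h : IsOrderedPartition n (k + 1) (splitBlocks B.1 i A (B.1 i \ A)) then
        ((-1 : K) ^ (i : ℕ)) • Finsupp.single (⟨_, h⟩ : OrderedPartition n (k + 1)) (1 : K)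
      else 0

/-- The ordered partition `({σ(1)}, {σ(2)}, …, {σ(n)})` of `{1,…,n}` into singletons. -/
def singletonOP (n : ℕ) (σ : Equiv.Perm (Fin n)) : OrderedPartition n n :=
  ⟨fun j => {σ j}, fun i => Finset.singleton_nonempty _, fun x =>
    ⟨σ.symm x, by simp, fun i hi => by
      simp only [Finset.mem_singleton] at hi
      rw [hi]; simp⟩⟩

/-- The totally antisymmetric element
`ω_n = (1/n!) Σ_{σ ∈ S_n} sgn(σ) · ({σ(1)}, …, {σ(n)}) ∈ C^n`. -/
noncomputable def omegaOP (K : Type*) [Field K] (n : ℕ) : OPC K n n :=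
  (n.factorial : K)⁻¹ • ∑ σ : Equiv.Perm (Fin n),
    ((Equiv.Perm.sign σ : ℤ) : K) • Finsupp.single (singletonOP n σ) (1 : K)

open Finset

namespace Fin

variable {k : ℕ}

theorem succ_succAbove_ne_castSucc {i j : Fin k} (h : j ≠ i) :
    i.succ.succAbove j ≠ i.castSucc := by
  rw [← succAbove_succ_self i]
  exact succAbove_right_injective.ne h

theorem eq_castSucc_or_eq_succ_or_eq_succ_succAbove (i : Fin k) (j : Fin (k + 1)) :
    j = i.castSucc ∨ j = i.succ ∨ ∃ j', j' ≠ i ∧ j = i.succ.succAbove j' := by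
  obtain rfl | hj := eq_or_ne j i.succ
  · exact .inr (.inl rfl)
  obtain ⟨j', rfl⟩ := exists_succAbove_eq hj
  obtain rfl | hj' := eq_or_ne j' i
  · exact .inl (succAbove_succ_self j')
  · exact .inr (.inr ⟨j', hj', rfl⟩)

end Fin

theorem Finset.eq_singleton_or_eq_singleton_of_subset_union {α : Type*} [DecidableEq α]
    {a b : α} {A : Finset α} (hA : A ⊆ {a} ∪ {b}) (hne : A.Nonempty)
    (hne' : (({a} ∪ {b}) \ A).Nonempty) : A = {a} ∨ A = {b} := by
  obtain ⟨y, hy⟩ := hne'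
  grind [eq_singleton_iff_nonempty_unique_mem]

section Blocks

variable {n k : ℕ}

theorem IsOrderedPartition.disjoint {B : Fin k → Finset (Fin n)} (hB : IsOrderedPartition n k B)
    {i j : Fin k} (hij : i ≠ j) : Disjoint (B i) (B j) :=
  disjoint_left.2 fun x hi hj => hij ((hB.2 x).unique hi hj)

theorem IsOrderedPartition.comp_perm {B : Fin k → Finset (Fin n)}
    (hB : IsOrderedPartition n k B) (e : Equiv.Perm (Fin k)) :
    IsOrderedPartition n k (B ∘ e) := by
  refine ⟨fun i => hB.1 (e i), fun x => ?_⟩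
  obtain ⟨i, hi, huniq⟩ := hB.2 x
  exact ⟨e.symm i, by simpa using hi, fun j hj => e.eq_symm_apply.2 (huniq _ hj)⟩

theorem splitBlocks_castSucc (B : Fin k → Finset (Fin n)) (i : Fin k) (A A' : Finset (Fin n)) :
    splitBlocks B i A A' i.castSucc = A :=
  Function.update_self _ _ _

theorem splitBlocks_succ (B : Fin k → Finset (Fin n)) (i : Fin k) (A A' : Finset (Fin n)) :
    splitBlocks B i A A' i.succ = A' := by
  rw [splitBlocks, Function.update_of_ne Fin.castSucc_lt_succ.ne', Fin.insertNth_apply_same]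

theorem splitBlocks_succ_succAbove (B : Fin k → Finset (Fin n)) (i : Fin k)
    (A A' : Finset (Fin n)) {j : Fin k} (hj : j ≠ i) :
    splitBlocks B i A A' (i.succ.succAbove j) = B j := by
  rw [splitBlocks, Function.update_of_ne (Fin.succ_succAbove_ne_castSucc hj),
    Fin.insertNth_apply_succAbove]

theorem IsOrderedPartition.nonempty_of_splitBlocks {B : Fin k → Finset (Fin n)} {i : Fin k}
    {A A' : Finset (Fin n)} (h : IsOrderedPartition n (k + 1) (splitBlocks B i A A')) :
    A.Nonempty ∧ A'.Nonempty := by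
  simpa only [splitBlocks_castSucc, splitBlocks_succ] using And.intro (h.1 i.castSucc) (h.1 i.succ)

theorem splitBlocks_sdiff_eq_comp_swap {B : Fin k → Finset (Fin n)} {i : Fin k}
    {A : Finset (Fin n)} (hA : A ⊆ B i) :
    splitBlocks B i (B i \ A) (B i \ (B i \ A)) =
      splitBlocks B i A (B i \ A) ∘ Equiv.swap i.castSucc i.succ := by
  funext j
  rcases Fin.eq_castSucc_or_eq_succ_or_eq_succ_succAbove i j with rfl | rfl | ⟨j', hj', rfl⟩
  · simp [splitBlocks_castSucc, splitBlocks_succ]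
  · simp [splitBlocks_castSucc, splitBlocks_succ, Finset.sdiff_sdiff_eq_self hA]
  · rw [Function.comp_apply, Equiv.swap_apply_of_ne_of_ne (Fin.succ_succAbove_ne_castSucc hj')
      (Fin.succAbove_ne _ _), splitBlocks_succ_succAbove _ _ _ _ hj',
      splitBlocks_succ_succAbove _ _ _ _ hj']

end Blocks

section TopDegree

variable {n : ℕ}

theorem IsOrderedPartition.sum_card {k : ℕ} {B : Fin k → Finset (Fin n)}
    (hB : IsOrderedPartition n k B) : ∑ i, #(B i) = n := by
  classical
  have hcover : univ.biUnion B = univ :=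
    eq_univ_of_forall fun x => mem_biUnion.2 ⟨_, mem_univ _, (hB.2 x).exists.choose_spec⟩
  rw [← card_biUnion fun i _ j _ hij => hB.disjoint hij, hcover, card_univ, Fintype.card_fin]

theorem IsOrderedPartition.card_eq_one {B : Fin n → Finset (Fin n)}
    (hB : IsOrderedPartition n n B) (i : Fin n) : #(B i) = 1 := by
  have hsum : ∑ j : Fin n, 1 = ∑ j, #(B j) := by simp [hB.sum_card]
  exact ((sum_eq_sum_iff_of_le fun j _ => card_pos.2 (hB.1 j)).1 hsum i (mem_univ i)).symm

theorem singletonOP_injective : Function.Injective (singletonOP n) :=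
  fun _ _ h => Equiv.ext fun i => singleton_injective (congrFun (congrArg Subtype.val h) i)

theorem exists_singletonOP_eq (P : OrderedPartition n n) : ∃ σ, singletonOP n σ = P := by
  choose f hf using fun i => card_eq_one.1 (P.2.card_eq_one i)
  have hinj : Function.Injective f := fun i j hij =>
    (P.2.2 (f i)).unique (by simp [hf]) (by simp [hf, hij])
  exact ⟨Equiv.ofBijective f (Finite.injective_iff_bijective.1 hinj),
    Subtype.ext (funext fun i => (hf i).symm)⟩

noncomputable def singletonOPEquiv : Equiv.Perm (Fin n) ≃ OrderedPartition n n :=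
  Equiv.ofBijective (singletonOP n) ⟨singletonOP_injective, exists_singletonOP_eq⟩

theorem singletonOP_mul_swap (σ : Equiv.Perm (Fin n)) (i j : Fin n) :
    (singletonOP n (σ * Equiv.swap i j)).1 = (singletonOP n σ).1 ∘ Equiv.swap i j :=
  rfl

end TopDegree

section Differential

variable (K : Type*) [Field K] {n k : ℕ}

open Classical in
noncomputable def splitTerm (B : OrderedPartition n k) (i : Fin k) (A : Finset (Fin n)) :
    OPC K n (k + 1) :=
  if h : IsOrderedPartition n (k + 1) (splitBlocks B.1 i A (B.1 i \ A)) then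
    ((-1 : K) ^ (i : ℕ)) • Finsupp.single (⟨_, h⟩ : OrderedPartition n (k + 1)) (1 : K)
  else 0

theorem dOP_single_one (B : OrderedPartition n k) :
    dOP K n k (Finsupp.single B 1) = ∑ i, ∑ A ∈ (B.1 i).powerset, splitTerm K B i A := by
  rw [dOP, Finsupp.lsum_single, LinearMap.toSpanSingleton_apply, one_smul]
  rfl

variable {K}

theorem splitTerm_of_splitBlocks_eq {B : OrderedPartition n k} {i : Fin k}
    {A : Finset (Fin n)} {P : OrderedPartition n (k + 1)}
    (h : splitBlocks B.1 i A (B.1 i \ A) = P.1) :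
    splitTerm K B i A = ((-1 : K) ^ (i : ℕ)) • Finsupp.single P 1 := by
  have hP : IsOrderedPartition n (k + 1) (splitBlocks B.1 i A (B.1 i \ A)) := h ▸ P.2
  obtain rfl : P = ⟨_, hP⟩ := Subtype.ext h.symm
  exact dif_pos hP

theorem splitTerm_of_not_isOrderedPartition {B : OrderedPartition n k} {i : Fin k}
    {A : Finset (Fin n)} (h : ¬ IsOrderedPartition n (k + 1) (splitBlocks B.1 i A (B.1 i \ A))) :
    splitTerm K B i A = 0 :=
  dif_neg h

theorem splitTerm_eq_zero {B : OrderedPartition n k} {i : Fin k} {A : Finset (Fin n)}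
    (h : ¬ (A.Nonempty ∧ (B.1 i \ A).Nonempty)) : splitTerm K B i A = 0 :=
  splitTerm_of_not_isOrderedPartition fun hP => h hP.nonempty_of_splitBlocks

end Differential

section SignFunctional

variable (K : Type*) [Field K]

noncomputable def signOP (n : ℕ) : OPC K n n →ₗ[K] K :=
  Finsupp.linearCombination K fun P => ((Equiv.Perm.sign (singletonOPEquiv.symm P) : ℤ) : K)

variable {K} {k : ℕ}

theorem signOP_single_singletonOP {n : ℕ} (σ : Equiv.Perm (Fin n)) (c : K) :
    signOP K n (Finsupp.single (singletonOP n σ) c) = c * (Equiv.Perm.sign σ : ℤ) := by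
  rw [signOP, Finsupp.linearCombination_single, smul_eq_mul]
  congr
  exact singletonOPEquiv.symm_apply_apply σ

theorem signOP_splitTerm_add_splitTerm_sdiff {B : OrderedPartition (k + 1) k} {i : Fin k}
    {A : Finset (Fin (k + 1))} (hA : A ⊆ B.1 i) :
    signOP K (k + 1) (splitTerm K B i A) + signOP K (k + 1) (splitTerm K B i (B.1 i \ A)) = 0 := by
  have hswap := splitBlocks_sdiff_eq_comp_swap hA
  by_cases hP : IsOrderedPartition (k + 1) (k + 1) (splitBlocks B.1 i A (B.1 i \ A))
  · obtain ⟨σ, hσ⟩ := exists_singletonOP_eq ⟨_, hP⟩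
    have hsplit : splitBlocks B.1 i A (B.1 i \ A) = (singletonOP (k + 1) σ).1 := by rw [hσ]
    rw [hsplit, ← singletonOP_mul_swap] at hswap
    rw [splitTerm_of_splitBlocks_eq hsplit, splitTerm_of_splitBlocks_eq hswap, map_smul,
      map_smul, signOP_single_singletonOP, signOP_single_singletonOP, Equiv.Perm.sign_mul,
      Equiv.Perm.sign_swap Fin.castSucc_lt_succ.ne]
    push_cast
    ring
  · have hP' : ¬ IsOrderedPartition (k + 1) (k + 1)
        (splitBlocks B.1 i (B.1 i \ A) (B.1 i \ (B.1 i \ A))) := fun h' => by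
      refine hP ?_
      convert h'.comp_perm (Equiv.swap i.castSucc i.succ) using 1
      rw [hswap]
      funext j
      simp
    rw [splitTerm_of_not_isOrderedPartition hP, splitTerm_of_not_isOrderedPartition hP',
      map_zero, add_zero]

theorem signOP_dOP (x : OPC K (k + 1) k) : signOP K (k + 1) (dOP K (k + 1) k x) = 0 := by
  induction x using Finsupp.induction_linear with
  | zero => rw [map_zero, map_zero]
  | add x y hx hy => rw [map_add, map_add, hx, hy, add_zero]
  | single B c =>
    rw [← Finsupp.smul_single_one _ c, map_smul, map_smul, dOP_single_one, map_sum, smul_eq_zero]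
    refine .inr (sum_eq_zero fun i _ => ?_)
    rw [map_sum]
    refine sum_involution (fun A _ => B.1 i \ A)
      (fun A hA => signOP_splitTerm_add_splitTerm_sdiff (mem_powerset.1 hA))
      (fun A _ hne hfix => hne ?_) (fun A _ => mem_powerset.2 sdiff_subset)
      (fun A hA => Finset.sdiff_sdiff_eq_self (mem_powerset.1 hA))
    rw [splitTerm_eq_zero, map_zero]
    rintro ⟨⟨x, hx⟩, -⟩
    exact (mem_sdiff.1 (hfix ▸ hx)).2 hx

end SignFunctional

section Merge

variable {n k : ℕ}

def mergeBlocks (C : Fin (k + 1) → Finset (Fin n)) (i : Fin k) : Fin k → Finset (Fin n) :=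
  Function.update (C ∘ i.succ.succAbove) i (C i.castSucc ∪ C i.succ)

theorem mergeBlocks_self (C : Fin (k + 1) → Finset (Fin n)) (i : Fin k) :
    mergeBlocks C i i = C i.castSucc ∪ C i.succ :=
  Function.update_self _ _ _

theorem mergeBlocks_of_ne (C : Fin (k + 1) → Finset (Fin n)) {i j : Fin k} (hj : j ≠ i) :
    mergeBlocks C i j = C (i.succ.succAbove j) :=
  Function.update_of_ne hj _ _

theorem IsOrderedPartition.mergeBlocks {C : Fin (k + 1) → Finset (Fin n)}
    (hC : IsOrderedPartition n (k + 1) C) (i : Fin k) :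
    IsOrderedPartition n k (mergeBlocks C i) := by
  refine ⟨fun j => ?_, fun x => ?_⟩
  · obtain rfl | hj := eq_or_ne j i
    · exact (mergeBlocks_self C j).symm ▸ (hC.1 _).mono subset_union_left
    · exact (mergeBlocks_of_ne C hj).symm ▸ hC.1 _
  obtain ⟨l, hl, huniq⟩ := hC.2 x
  have mem_merged : ∀ j, x ∈ _root_.mergeBlocks C i j →
      j = i ∧ (i.castSucc = l ∨ i.succ = l) ∨ j ≠ i ∧ i.succ.succAbove j = l := by
    intro j hx
    obtain rfl | hj := eq_or_ne j i
    · rw [mergeBlocks_self, mem_union] at hx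
      exact .inl ⟨rfl, hx.imp (huniq _) (huniq _)⟩
    · rw [mergeBlocks_of_ne C hj] at hx
      exact .inr ⟨hj, huniq _ hx⟩
  rcases Fin.eq_castSucc_or_eq_succ_or_eq_succ_succAbove i l with rfl | rfl | ⟨j', hj', rfl⟩
  · refine ⟨i, by simp [mergeBlocks_self, hl], fun j hj => ?_⟩
    rcases mem_merged j hj with ⟨rfl, -⟩ | ⟨hji, hl'⟩
    · rfl
    · exact absurd hl' (Fin.succ_succAbove_ne_castSucc hji)
  · refine ⟨i, by simp [mergeBlocks_self, hl], fun j hj => ?_⟩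
    rcases mem_merged j hj with ⟨rfl, -⟩ | ⟨-, hl'⟩
    · rfl
    · exact absurd hl' (Fin.succAbove_ne _ _)
  · refine ⟨j', by simpa [mergeBlocks_of_ne C hj'] using hl, fun j hj => ?_⟩
    rcases mem_merged j hj with ⟨rfl, hl' | hl'⟩ | ⟨-, hl'⟩
    · exact absurd hl'.symm (Fin.succ_succAbove_ne_castSucc hj')
    · exact absurd hl'.symm (Fin.succAbove_ne _ _)
    · exact Fin.succAbove_right_injective hl'

theorem splitBlocks_mergeBlocks {C : Fin (k + 1) → Finset (Fin n)}
    (hC : IsOrderedPartition n (k + 1) C) (i : Fin k) :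
    splitBlocks (mergeBlocks C i) i (C i.castSucc) (mergeBlocks C i i \ C i.castSucc) = C := by
  funext j
  rcases Fin.eq_castSucc_or_eq_succ_or_eq_succ_succAbove i j with rfl | rfl | ⟨j', hj', rfl⟩
  · exact splitBlocks_castSucc _ _ _ _
  · rw [splitBlocks_succ, mergeBlocks_self,
      union_sdiff_cancel_left (hC.disjoint Fin.castSucc_lt_succ.ne)]
  · rw [splitBlocks_succ_succAbove _ _ _ _ hj', mergeBlocks_of_ne C hj']

theorem mergeBlocks_comp_swap (C : Fin (k + 1) → Finset (Fin n)) (i : Fin k) :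
    mergeBlocks (C ∘ Equiv.swap i.castSucc i.succ) i = mergeBlocks C i := by
  funext j
  obtain rfl | hj := eq_or_ne j i
  · simp [mergeBlocks_self, union_comm]
  · rw [mergeBlocks_of_ne _ hj, mergeBlocks_of_ne _ hj, Function.comp_apply,
      Equiv.swap_apply_of_ne_of_ne (Fin.succ_succAbove_ne_castSucc hj) (Fin.succAbove_ne _ _)]

end Merge

section Cohomology

variable (K : Type*) [Field K] {k : ℕ}

def mergedSingletonOP (σ : Equiv.Perm (Fin (k + 1))) (i : Fin k) : OrderedPartition (k + 1) k :=
  ⟨mergeBlocks (singletonOP (k + 1) σ).1 i, (singletonOP (k + 1) σ).2.mergeBlocks i⟩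

theorem dOP_single_mergedSingletonOP (σ : Equiv.Perm (Fin (k + 1))) (i : Fin k) :
    dOP K (k + 1) k (Finsupp.single (mergedSingletonOP σ i) 1) =
      ((-1 : K) ^ (i : ℕ)) • (Finsupp.single (singletonOP (k + 1) σ) 1 +
        Finsupp.single (singletonOP (k + 1) (σ * Equiv.swap i.castSucc i.succ)) 1) := by
  set τ := σ * Equiv.swap i.castSucc i.succ
  have hsplit_left := splitBlocks_mergeBlocks (singletonOP (k + 1) σ).2 i
  have hsplit_right := splitBlocks_mergeBlocks (singletonOP (k + 1) τ).2 i
  rw [singletonOP_mul_swap, mergeBlocks_comp_swap, Function.comp_apply,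
    Equiv.swap_apply_left] at hsplit_right
  have hblock : (mergedSingletonOP σ i).1 i = {σ i.castSucc} ∪ {σ i.succ} :=
    mergeBlocks_self _ _
  have hne : ({σ i.castSucc} : Finset (Fin (k + 1))) ≠ {σ i.succ} :=
    singleton_injective.ne (σ.injective.ne Fin.castSucc_lt_succ.ne)
  rw [dOP_single_one, sum_eq_single i]
  · rw [hblock, sum_eq_add_of_mem _ _ (by simp) (by simp) hne, smul_add,
      splitTerm_of_splitBlocks_eq hsplit_left,
      splitTerm_of_splitBlocks_eq (P := singletonOP _ τ) hsplit_right]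
    rintro A hA ⟨hA₁, hA₂⟩
    refine splitTerm_eq_zero fun ⟨hAne, hAne'⟩ => ?_
    rw [hblock] at hAne'
    exact (eq_singleton_or_eq_singleton_of_subset_union (mem_powerset.1 hA) hAne hAne').elim
      hA₁ hA₂
  · intro j _ hj
    refine sum_eq_zero fun A hA => splitTerm_eq_zero ?_
    rintro ⟨hAne, hAne'⟩
    have hblock_j : (mergedSingletonOP σ i).1 j = {σ (i.succ.succAbove j)} :=
      mergeBlocks_of_ne _ hj
    rw [mem_powerset, hblock_j, subset_singleton_iff] at hA
    rw [hblock_j] at hAne'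
    rcases hA with rfl | rfl
    · exact hAne.ne_empty rfl
    · exact hAne'.ne_empty (Finset.sdiff_self _)
  · exact fun h => (h (mem_univ i)).elim

theorem mkQ_single_singletonOP_mul_swap (σ : Equiv.Perm (Fin (k + 1))) (i : Fin k) :
    (LinearMap.range (dOP K (k + 1) k)).mkQ
        (Finsupp.single (singletonOP (k + 1) (σ * Equiv.swap i.castSucc i.succ)) 1) =
      -(LinearMap.range (dOP K (k + 1) k)).mkQ (Finsupp.single (singletonOP (k + 1) σ) 1) := by
  refine eq_neg_of_add_eq_zero_left ?_
  rw [← map_add, Submodule.mkQ_apply, Submodule.Quotient.mk_eq_zero]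
  refine ⟨((-1 : K) ^ (i : ℕ)) • Finsupp.single (mergedSingletonOP σ i) 1, ?_⟩
  rw [map_smul, dOP_single_mergedSingletonOP, smul_smul, ← pow_add,
    Even.neg_one_pow ⟨_, rfl⟩, one_smul]
  exact add_comm _ _

theorem mkQ_single_singletonOP (σ : Equiv.Perm (Fin (k + 1))) :
    (LinearMap.range (dOP K (k + 1) k)).mkQ (Finsupp.single (singletonOP (k + 1) σ) 1) =
      ((Equiv.Perm.sign σ : ℤ) : K) •
        (LinearMap.range (dOP K (k + 1) k)).mkQ (Finsupp.single (singletonOP (k + 1) 1) 1) := by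
  induction σ using Submonoid.induction_of_closure_eq_top_right
    (Equiv.Perm.mclosure_swap_castSucc_succ k) with
  | one => rw [Equiv.Perm.sign_one, Units.val_one, Int.cast_one, one_smul]
  | mul_right τ s hs ih =>
    obtain ⟨i, rfl⟩ := hs
    rw [mkQ_single_singletonOP_mul_swap, ih, Equiv.Perm.sign_mul,
      Equiv.Perm.sign_swap Fin.castSucc_lt_succ.ne, Units.val_mul, Int.cast_mul, mul_smul]
    simp

theorem span_mkQ_single_singletonOP_one :
    Submodule.span K {(LinearMap.range (dOP K (k + 1) k)).mkQ
      (Finsupp.single (singletonOP (k + 1) 1) 1)} = ⊤ := by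
  rw [eq_top_iff]
  rintro x -
  obtain ⟨y, rfl⟩ := Submodule.mkQ_surjective _ x
  induction y using Finsupp.induction_linear with
  | zero => simp
  | add y z hy hz =>
    rw [map_add]
    exact add_mem hy hz
  | single P c =>
    obtain ⟨σ, rfl⟩ := exists_singletonOP_eq P
    rw [← Finsupp.smul_single_one _ c, map_smul, mkQ_single_singletonOP K σ, smul_smul]
    exact Submodule.smul_mem _ _ (Submodule.mem_span_singleton_self _)

end Cohomology

theorem map_omegaOP {K M : Type*} [Field K] [CharZero K] [AddCommGroup M] [Module K M] {n : ℕ}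
    (f : OPC K n n →ₗ[K] M) (v : M)
    (hf : ∀ σ, f (Finsupp.single (singletonOP n σ) 1) = ((Equiv.Perm.sign σ : ℤ) : K) • v) :
    f (omegaOP K n) = v := by
  have hterm : ∀ σ : Equiv.Perm (Fin n),
      f (((Equiv.Perm.sign σ : ℤ) : K) • Finsupp.single (singletonOP n σ) 1) = v := by
    intro σ
    rw [map_smul, hf, smul_smul, ← Int.cast_mul, ← Units.val_mul, Int.units_mul_self,
      Units.val_one, Int.cast_one, one_smul]
  rw [omegaOP, map_smul, map_sum, sum_congr rfl fun σ _ => hterm σ, sum_const, card_univ,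
    Fintype.card_perm, Fintype.card_fin, ← Nat.cast_smul_eq_nsmul K, smul_smul,
    inv_mul_cancel₀ (Nat.cast_ne_zero.2 n.factorial_ne_zero), one_smul]

/-- the class of `ω_n` in `C^n / im(d : C^{n−1} → C^n)` is nonzero and spans
the top cohomology `H^n(C)`.  (Here `n ≥ 1` is written as `m + 1`.) -/
theorem statement2 (K : Type*) [Field K] [CharZero K] (m : ℕ) :
    (Submodule.Quotient.mk (omegaOP K (m + 1)) ≠
        (0 : OPC K (m + 1) (m + 1) ⧸ LinearMap.range (dOP K (m + 1) m))) ∧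
      Submodule.span K
          {(Submodule.Quotient.mk (omegaOP K (m + 1)) :
            OPC K (m + 1) (m + 1) ⧸ LinearMap.range (dOP K (m + 1) m))} = ⊤ := by
  have hsign : signOP K (m + 1) (omegaOP K (m + 1)) = 1 :=
    map_omegaOP _ _ fun σ => by rw [signOP_single_singletonOP, smul_eq_mul, mul_one, one_mul]
  have hclass := map_omegaOP _ _ (mkQ_single_singletonOP K (k := m))
  refine ⟨fun h => one_ne_zero (α := K) ?_, ?_⟩
  · obtain ⟨x, hx⟩ := (Submodule.Quotient.mk_eq_zero _).1 h
    rw [← hsign, ← hx, signOP_dOP]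
  · rw [← Submodule.mkQ_apply, hclass]
    exact span_mkQ_single_singletonOP_one K
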